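/- Let U ⊆ {a,b}^m be a set of forbidden descent words, and suppose φ ∈ L²([0,1]^m) is an eigenfunction of the associated descent-pattern operator T with nonzero eigenvalue λ, i.e., Tφ = λφ. Then the restriction of φ to each descent polytope P_u (u ∈ {a,b}^{m−1}) depends only on the first coordinate x₁ (almost everywhere). -/

import Mathlib

open MeasureTheory

noncomputable section

/-- The unit cube [0,1]^m. -/
def unitCube (m : ℕ) : Set (Fin m → ℝ) := Set.univ.pi fun _ => Set.Icc (0 : ℝ) 1

/-- Lebesgue measure restricted to the unit cube. -/
def cubeMeasure (m : ℕ) : Measure (Fin m → ℝ) := volume.restrict (unitCube m)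

/-- The vector (t, x₁, …, x_{m-1}) obtained by shifting x and prepending t. -/
def shiftIn {m : ℕ} (t : ℝ) (x : Fin m → ℝ) : Fin m → ℝ :=
  fun i => if i.val = 0 then t else x ⟨i.val - 1, by have := i.isLt; omega⟩

open Classical in
/-- The descent word of y ∈ [0,1]^{m+1}: entry i is `true` (a descent, letter b) if
y_{i+1} < y_i and `false` (an ascent, letter a) otherwise. -/
def descentWord {m : ℕ} (y : Fin (m + 1) → ℝ) : Fin m → Bool :=
  fun i => decide (y i.succ < y i.castSucc)

open Classical in
/-- χ(y) = 1 iff the descent word of y is not a forbidden word in U. -/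
def chiU {m : ℕ} (U : Set (Fin m → Bool)) : (Fin (m + 1) → ℝ) → ℝ :=
  fun y => if descentWord y ∈ U then 0 else 1

/-- The integral operator associated to descent pattern avoidance. -/
def TOp {m : ℕ} (χ : (Fin (m + 1) → ℝ) → ℝ) (f : (Fin m → ℝ) → ℝ) :
    (Fin m → ℝ) → ℝ :=
  fun x => ∫ t in Set.Icc (0 : ℝ) 1, χ (Fin.cons t x) * f (shiftIn t x)

/-- The descent polytope P_u ⊆ [0,1]^m of an ab-word u (encoded by u : ℕ → Bool,
`true` = b = descent, only the first m−1 letters being relevant). -/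
def descentPolytope (m : ℕ) (u : ℕ → Bool) : Set (Fin m → ℝ) :=
  {x | (∀ i, x i ∈ Set.Icc (0 : ℝ) 1) ∧
    ∀ (i : ℕ) (h : i + 1 < m),
      if u i then x ⟨i + 1, h⟩ ≤ x ⟨i, by omega⟩ else x ⟨i, by omega⟩ ≤ x ⟨i + 1, h⟩}

/-! Every point of `P_u` with distinct coordinates has descent word `u`, and then the descent word
of `(t, x)` is `u` with one letter prepended, while `(t, x₁, …, x_{m-1})` lies in the polytope of
that longer word. Hence if `φ` agrees on every polytope with a function of the first `k + 1`
coordinates, the eigenvalue equation `φ = λ⁻¹ Tφ` expresses `φ` on every polytope as a function of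
the first `k` coordinates. Descending from `k = m` to `k = 1` gives the theorem; ties between
coordinates and the shift `x ↦ (t, x₁, …, x_{m-1})` only cost null sets. -/

open Filter Function

lemma shiftIn_eq_cons {n : ℕ} (t : ℝ) (x : Fin (n + 1) → ℝ) :
    shiftIn t x = Fin.cons t (Fin.init x) := by
  ext i
  cases i using Fin.cases <;> simp [shiftIn, Fin.init]; rfl

def consWord (b : Bool) (u : ℕ → Bool) : ℕ → Bool
  | 0 => b
  | i + 1 => u i

lemma descentWord_cons {n : ℕ} (t : ℝ) (x : Fin (n + 1) → ℝ) :
    descentWord (Fin.cons t x : Fin (n + 2) → ℝ) = Fin.cons (decide (x 0 < t)) (descentWord x) := by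
  ext i
  cases i using Fin.cases <;> simp [descentWord]

lemma descentWord_eq_of_mem_descentPolytope {n : ℕ} {u : ℕ → Bool} {x : Fin (n + 1) → ℝ}
    (hx : x ∈ descentPolytope (n + 1) u) (hinj : Injective x) :
    descentWord x = fun i : Fin n => u i := by
  ext i
  have hne : x i.succ ≠ x i.castSucc := hinj.ne (Fin.castSucc_lt_succ (i := i)).ne'
  have h : if u i then x i.succ ≤ x i.castSucc else x i.castSucc ≤ x i.succ := hx.2 i i.succ.isLt
  cases hu : u i <;> simp only [hu, descentWord, decide_eq_true_eq, decide_eq_false_iff_not,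
    not_lt, if_true, if_false, Bool.false_eq_true] at h ⊢
  exacts [h, h.lt_of_ne hne]

lemma descentPolytope_subset_unitCube (m : ℕ) (u : ℕ → Bool) :
    descentPolytope m u ⊆ unitCube m :=
  fun _ hx i _ => hx.1 i

lemma shiftIn_mem_descentPolytope {n : ℕ} {u : ℕ → Bool} {x : Fin (n + 1) → ℝ} {t : ℝ}
    (hx : x ∈ descentPolytope (n + 1) u) (ht : t ∈ Set.Icc (0 : ℝ) 1) :
    shiftIn t x ∈ descentPolytope (n + 1) (consWord (decide (x 0 < t)) u) := by
  refine ⟨fun i => ?_, fun i hi => ?_⟩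
  · unfold shiftIn
    split_ifs
    · exact ht
    · exact hx.1 _
  · cases i with
    | zero =>
      by_cases h : x 0 < t
      · simp [shiftIn, consWord, h, h.le]
      · simp [shiftIn, consWord, h, not_lt.mp h]
    | succ i => simpa [shiftIn, consWord] using hx.2 i (by omega)

lemma DependsOn.comp_shiftIn {m k : ℕ} {f : (Fin m → ℝ) → ℝ}
    (hf : DependsOn f {i | (i : ℕ) < k + 1}) (t : ℝ) :
    DependsOn (fun x => f (shiftIn t x)) {i | (i : ℕ) < k} := fun x y hxy => hf fun i hi => by
  simp only [shiftIn]
  split_ifs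
  · rfl
  · exact hxy _ (by simp only [Set.mem_ofPred_eq] at hi ⊢; omega)

lemma volume_setOf_apply_eq_apply {m : ℕ} {i j : Fin m} (hij : i ≠ j) :
    (volume : Measure (Fin m → ℝ)) {x | x i = x j} = 0 := by
  let L : (Fin m → ℝ) →ₗ[ℝ] ℝ := LinearMap.proj (R := ℝ) (φ := fun _ => ℝ) i - LinearMap.proj j
  have hL : LinearMap.ker L ≠ ⊤ := fun h => by
    have := (LinearMap.ker_eq_top.mp h ▸ rfl : L (Pi.single i 1) = 0)
    simp [L, hij.symm] at this
  have hset : {x : Fin m → ℝ | x i = x j} = LinearMap.ker L := by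
    ext x
    simp [L, sub_eq_zero]
  rw [hset]
  exact Measure.addHaar_submodule volume _ hL

lemma ae_injective (m : ℕ) : ∀ᵐ x : Fin m → ℝ, Injective x := by
  simp only [Injective, ae_all_iff]
  intro i j
  by_cases hij : i = j
  · exact ae_of_all _ fun _ _ => hij
  · exact (measure_eq_zero_iff_ae_notMem.mp (volume_setOf_apply_eq_apply hij)).mono
      fun x hx hxij => absurd hxij hx

lemma ae_ae_cons {n : ℕ} {p : (Fin (n + 1) → ℝ) → Prop} (h : ∀ᵐ y, p y) :
    ∀ᵐ z : Fin n → ℝ, ∀ᵐ t : ℝ, p (Fin.cons t z) := by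
  have hprod : ∀ᵐ q : ℝ × (Fin n → ℝ), p (Fin.cons q.1 q.2) := by
    have hmp := (volume_preserving_piFinSuccAbove (fun _ : Fin (n + 1) => ℝ) 0).symm
    simpa [MeasurableEquiv.piFinSuccAbove_symm_apply, Fin.insertNth_zero', Fin.consEquiv] using
      hmp.quasiMeasurePreserving.ae h
  rw [Measure.volume_eq_prod] at hprod
  exact Measure.ae_ae_of_ae_prod (Measure.measurePreserving_swap.quasiMeasurePreserving.ae hprod)

lemma ae_init {n : ℕ} {p : (Fin n → ℝ) → Prop} (h : ∀ᵐ z, p z) :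
    ∀ᵐ x : Fin (n + 1) → ℝ, p (Fin.init x) := by
  have hmp := volume_preserving_piFinSuccAbove (fun _ : Fin (n + 1) => ℝ) (Fin.last n)
  rw [Measure.volume_eq_prod] at hmp
  simpa using (Measure.quasiMeasurePreserving_snd.comp hmp.quasiMeasurePreserving).ae h

lemma ae_ae_shiftIn {n : ℕ} {p : (Fin (n + 1) → ℝ) → Prop} (h : ∀ᵐ y, p y) :
    ∀ᵐ x : Fin (n + 1) → ℝ, ∀ᵐ t : ℝ, p (shiftIn t x) := by
  simpa only [shiftIn_eq_cons] using ae_init (ae_ae_cons h)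

/-- Lean's coordinates `0, …, k - 1` are the paper's `x₁, …, x_k`. -/
def DependsOnFirstOnPolytopes {m : ℕ} (φ : (Fin m → ℝ) → ℝ) (k : ℕ) : Prop :=
  ∀ u : ℕ → Bool, ∃ g : (Fin m → ℝ) → ℝ, DependsOn g {i | (i : ℕ) < k} ∧
    ∀ᵐ x ∂cubeMeasure m, x ∈ descentPolytope m u → φ x = g x

section Eigenfunction

variable {n : ℕ} {U : Set (Fin (n + 1) → Bool)} {φ : (Fin (n + 1) → ℝ) → ℝ}

open Classical in
/-- Off a null set, the descent word of `(t, x)` and the polytope containing `shiftIn t x` are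
read off from `u` and the sign of `t - x 0`. -/
def TOpOnPolytope (U : Set (Fin (n + 1) → Bool)) (g : (ℕ → Bool) → (Fin (n + 1) → ℝ) → ℝ)
    (u : ℕ → Bool) (x : Fin (n + 1) → ℝ) : ℝ :=
  ∫ t in Set.Icc (0 : ℝ) 1,
    (if Fin.cons (decide (x 0 < t)) (fun i : Fin n => u i) ∈ U then 0 else 1) *
      g (consWord (decide (x 0 < t)) u) (shiftIn t x)

lemma ae_TOp_chiU_eq_TOpOnPolytope {g : (ℕ → Bool) → (Fin (n + 1) → ℝ) → ℝ}
    (hg : ∀ v, ∀ᵐ y ∂cubeMeasure (n + 1), y ∈ descentPolytope (n + 1) v → φ y = g v y)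
    (u : ℕ → Bool) :
    ∀ᵐ x ∂cubeMeasure (n + 1), x ∈ descentPolytope (n + 1) u →
      TOp (chiU U) φ x = TOpOnPolytope U g u x := by
  have hshift : ∀ᵐ x : Fin (n + 1) → ℝ, ∀ᵐ t : ℝ, ∀ b : Bool,
      shiftIn t x ∈ descentPolytope (n + 1) (consWord b u) →
        φ (shiftIn t x) = g (consWord b u) (shiftIn t x) := by
    refine ae_ae_shiftIn (p := fun y => ∀ b : Bool, y ∈ descentPolytope (n + 1) (consWord b u) →
      φ y = g (consWord b u) y) (ae_all_iff.mpr fun b => ?_)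
    filter_upwards [(ae_restrict_iff' (MeasurableSet.univ_pi fun _ => measurableSet_Icc)).mp
      (hg (consWord b u))] with y hy hyu
    exact hy (descentPolytope_subset_unitCube _ _ hyu) hyu
  filter_upwards [ae_restrict_of_ae hshift, ae_restrict_of_ae (ae_injective (n + 1))]
    with x hx hinj hxu
  refine setIntegral_congr_ae measurableSet_Icc (hx.mono fun t ht htI => ?_)
  rw [chiU, descentWord_cons, descentWord_eq_of_mem_descentPolytope hxu hinj,
    ht _ (shiftIn_mem_descentPolytope hxu htI)]

lemma dependsOn_TOpOnPolytope {k : ℕ} {g : (ℕ → Bool) → (Fin (n + 1) → ℝ) → ℝ}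
    (hg : ∀ v, DependsOn (g v) {i | (i : ℕ) < k + 2}) (u : ℕ → Bool) :
    DependsOn (TOpOnPolytope U g u) {i | (i : ℕ) < k + 1} := fun x y hxy => by
  have h0 : x 0 = y 0 := hxy 0 (by simp)
  refine setIntegral_congr_fun measurableSet_Icc fun t _ => ?_
  rw [h0]
  exact congrArg _ ((hg _).comp_shiftIn t hxy)

lemma DependsOnFirstOnPolytopes.of_succ {k : ℕ} {lam : ℝ} (hlam : lam ≠ 0)
    (heig : ∀ᵐ x ∂cubeMeasure (n + 1), TOp (chiU U) φ x = lam * φ x)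
    (h : DependsOnFirstOnPolytopes φ (k + 2)) : DependsOnFirstOnPolytopes φ (k + 1) := by
  choose g hgdep hg using h
  refine fun u => ⟨fun x => lam⁻¹ * TOpOnPolytope U g u x,
    fun x y hxy => congrArg (lam⁻¹ * ·) (dependsOn_TOpOnPolytope hgdep u hxy), ?_⟩
  filter_upwards [heig, ae_TOp_chiU_eq_TOpOnPolytope hg u] with x hx hTx hxu
  rw [← hTx hxu, hx, inv_mul_cancel_left₀ hlam]

end Eigenfunction

theorem descent_eigenfunction_depends_on_first_coordinate_general (m : ℕ) (hm : 0 < m)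
    (U : Set (Fin m → Bool)) (lam : ℝ) (hlam : lam ≠ 0)
    (φ : (Fin m → ℝ) → ℝ)
    (heig : ∀ᵐ x ∂cubeMeasure m, TOp (chiU U) φ x = lam * φ x) :
    ∀ u : ℕ → Bool, ∃ g : ℝ → ℝ,
      ∀ᵐ x ∂cubeMeasure m, x ∈ descentPolytope m u → φ x = g (x ⟨0, hm⟩) := by
  obtain ⟨n, rfl⟩ : ∃ n, m = n + 1 := ⟨m - 1, by omega⟩
  have hfirst : DependsOnFirstOnPolytopes φ 1 :=
    Nat.decreasingInduction (motive := fun k _ => DependsOnFirstOnPolytopes φ (k + 1))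
      (fun _ _ ih => ih.of_succ hlam heig)
      (fun _ => ⟨φ, fun _ _ h => congrArg φ (funext fun i => h i i.isLt),
        ae_of_all _ fun _ _ => rfl⟩)
      (Nat.zero_le n)
  intro u
  obtain ⟨g, hgdep, hg⟩ := hfirst u
  refine ⟨fun r => g fun _ => r, hg.mono fun x hx hxu => (hx hxu).trans (hgdep fun i hi => ?_)⟩
  exact congrArg x (Fin.ext (Nat.lt_one_iff.mp hi))

/-- an eigenfunction φ ∈ L²([0,1]^m) of the descent-pattern operator T
with nonzero eigenvalue λ depends, on each descent polytope P_u, only on the first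
coordinate x₁ (almost everywhere). -/
theorem descent_eigenfunction_depends_on_first_coordinate (m : ℕ) (hm : 0 < m)
    (U : Set (Fin m → Bool)) (lam : ℝ) (hlam : lam ≠ 0)
    (φ : (Fin m → ℝ) → ℝ) (hφ : MemLp φ 2 (cubeMeasure m))
    (heig : ∀ᵐ x ∂cubeMeasure m, TOp (chiU U) φ x = lam * φ x) :
    ∀ u : ℕ → Bool, ∃ g : ℝ → ℝ,
      ∀ᵐ x ∂cubeMeasure m, x ∈ descentPolytope m u → φ x = g (x ⟨0, hm⟩) :=
  descent_eigenfunction_depends_on_first_coordinate_general m hm U lam hlam φ heig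

end
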